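/- arXiv:0712.3949 — 3 statements merged into one kernel-verified Lean document; each statement's English description precedes it below -/
import Mathlib

section
/- A continuous curve γ: ℝ → M is partially future imprisoned in some compact set (i.e., there exists a compact C such that for every t there is t' > t with γ(t') ∈ C) if and only if Ω_f(γ) is nonempty, provided M is a locally compact Hausdorff space. -/
/-!
Ω_f(γ) is the set of cluster points of γ along `atTop`, and partial imprisonment in `C` says
that γ is frequently in `C`. A compact set visited frequently contains a cluster point;
conversely, a compact neighbourhood of a cluster point is visited frequently.
-/

open Set Filter

theorem exists_isCompact_frequently_mem_iff_exists_mapClusterPt {ι X : Type*} [TopologicalSpace X]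
    [WeaklyLocallyCompactSpace X] {l : Filter ι} {f : ι → X} :
    (∃ C : Set X, IsCompact C ∧ ∃ᶠ i in l, f i ∈ C) ↔ ∃ x, MapClusterPt x l f := by
  constructor
  · rintro ⟨C, hC, hfreq⟩
    obtain ⟨x, -, hx⟩ := hC.exists_mapClusterPt_of_frequently hfreq
    exact ⟨x, hx⟩
  · rintro ⟨x, hx⟩
    obtain ⟨C, hC, hCx⟩ := exists_compact_mem_nhds x
    exact ⟨C, hC, hx.frequently hCx⟩

theorem iInter_closure_image_Ici_eq_setOf_mapClusterPt {ι X : Type*} [TopologicalSpace X]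
    [Preorder ι] [IsDirectedOrder ι] [Nonempty ι] (f : ι → X) :
    ⋂ i, closure (f '' Ici i) = {x | MapClusterPt x atTop f} := by
  ext x
  simp only [mem_iInter, mem_ofPred_eq, mapClusterPt_atTop_iff_forall_mem_closure]

theorem partially_imprisoned_iff_omegaLimit_nonempty_general {M : Type*} [TopologicalSpace M]
    [LocallyCompactSpace M] (γ : ℝ → M) :
    (∃ C : Set M, IsCompact C ∧ ∀ t : ℝ, ∃ t' > t, γ t' ∈ C) ↔
      (⋂ t : ℝ, closure (γ '' Ici t)).Nonempty := by
  simp_rw [← frequently_atTop', iInter_closure_image_Ici_eq_setOf_mapClusterPt]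
  exact exists_isCompact_frequently_mem_iff_exists_mapClusterPt

theorem partially_imprisoned_iff_omegaLimit_nonempty {M : Type*} [TopologicalSpace M]
    [T2Space M] [LocallyCompactSpace M] (γ : ℝ → M) (hγ : Continuous γ) :
    (∃ C : Set M, IsCompact C ∧ ∀ t : ℝ, ∃ t' > t, γ t' ∈ C) ↔
      (⋂ t : ℝ, closure (γ '' Ici t)).Nonempty :=
  partially_imprisoned_iff_omegaLimit_nonempty_general γ
end

section
/- If γ: ℝ → M is continuous and Ω_f(γ) is nonempty and compact, where M carries a complete metric (proper metric space), then γ is totally future imprisoned in the closed ε-neighborhood of Ω_f(γ) for every ε > 0. -/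
/-!
If `γ` left a neighbourhood `U` of the compact set `Ω` of its future cluster points at arbitrarily
late times, then, since it also comes arbitrarily close to `Ω` and the tails `γ '' Ici T` are
connected, it would cross the frontier of `U` at arbitrarily late times. In a locally compact space
`U` can be taken with compact closure, so these crossings accumulate at a point of the frontier
of `U`, which is then a cluster point of `γ` outside the open set `U ⊇ Ω`.
-/

open Set Metric Filter Topology

theorem IsPreconnected.inter_frontier_nonempty {X : Type*} [TopologicalSpace X] {C s : Set X}
    (hC : IsPreconnected C) (hCs : (C ∩ s).Nonempty) (hCs' : (C \ s).Nonempty) :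
    (C ∩ frontier s).Nonempty := by
  by_contra h
  have hcover : C ⊆ interior s ∪ (closure s)ᶜ := fun x hx => by
    by_contra hx'
    simp only [mem_union, mem_compl_iff, not_or, not_not] at hx'
    exact h ⟨x, hx, hx'.2, hx'.1⟩
  rcases hC.subset_or_subset isOpen_interior isClosed_closure.isOpen_compl
      (disjoint_compl_right.mono_left interior_subset_closure) hcover with hint | hext
  · obtain ⟨x, hxC, hxs⟩ := hCs'
    exact hxs (interior_subset (hint hxC))
  · obtain ⟨x, hxC, hxs⟩ := hCs
    exact hext hxC (subset_closure hxs)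

section ClusterSet

variable {α X : Type*} [ConditionallyCompleteLinearOrder α] [TopologicalSpace α]
  [OrderTopology α] [DenselyOrdered α] [TopologicalSpace X] {γ : α → X}

theorem Continuous.frequently_atTop_mem_frontier (hγ : Continuous γ) {s : Set X}
    (hin : ∃ᶠ t in atTop, γ t ∈ s) (hout : ∃ᶠ t in atTop, γ t ∉ s) :
    ∃ᶠ t in atTop, γ t ∈ frontier s := by
  refine frequently_atTop.2 fun T => ?_
  obtain ⟨a, haT, ha⟩ := frequently_atTop.1 hin T
  obtain ⟨b, hbT, hb⟩ := frequently_atTop.1 hout T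
  obtain ⟨_, ⟨t, htT, rfl⟩, ht⟩ :=
    (isPreconnected_Ici.image γ hγ.continuousOn).inter_frontier_nonempty
      ⟨γ a, mem_image_of_mem γ haT, ha⟩ ⟨γ b, mem_image_of_mem γ hbT, hb⟩
  exact ⟨t, htT, ht⟩

theorem Continuous.tendsto_nhdsSet_setOf_mapClusterPt [LocallyCompactSpace X] [RegularSpace X]
    (hγ : Continuous γ) (hne : {x | MapClusterPt x atTop γ}.Nonempty)
    (hcpt : IsCompact {x | MapClusterPt x atTop γ}) :
    Tendsto γ atTop (𝓝ˢ {x | MapClusterPt x atTop γ}) := by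
  refine (hasBasis_nhdsSet _).tendsto_right_iff.2 fun V ⟨hV, hΩV⟩ => ?_
  obtain ⟨U, hU, hΩU, hUV, hUc⟩ := exists_open_between_and_isCompact_closure hcpt hV hΩV
  refine Eventually.mono ?_ fun t ht => hUV (subset_closure ht)
  by_contra hout
  obtain ⟨ω, hω⟩ := hne
  have hin : ∃ᶠ t in atTop, γ t ∈ U := MapClusterPt.frequently hω (hU.mem_nhds (hΩU hω))
  have hfrontier : IsCompact (frontier U) :=
    hUc.of_isClosed_subset isClosed_frontier frontier_subset_closure
  obtain ⟨p, hpU, hp⟩ := hfrontier.exists_mapClusterPt_of_frequently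
    (hγ.frequently_atTop_mem_frontier hin (not_eventually.1 hout))
  exact (hU.inter_frontier_eq.subset ⟨hΩU hp, hpU⟩).elim

end ClusterSet

theorem totally_imprisoned_in_eps_nbhd {M : Type*} [MetricSpace M] [ProperSpace M]
    (γ : ℝ → M) (hγ : Continuous γ)
    (hne : (⋂ t : ℝ, closure (γ '' Ici t)).Nonempty)
    (hcpt : IsCompact (⋂ t : ℝ, closure (γ '' Ici t))) :
    ∀ ε > (0 : ℝ), ∃ T : ℝ, ∀ t ≥ T,
      γ t ∈ {y : M | infDist y (⋂ t : ℝ, closure (γ '' Ici t)) ≤ ε} := by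
  intro ε hε
  have hΩ : ⋂ t : ℝ, closure (γ '' Ici t) = {x | MapClusterPt x atTop γ} := by
    ext x
    simp [mapClusterPt_atTop_iff_forall_mem_closure]
  rw [hΩ] at hne hcpt ⊢
  have hnear :=
    (tendsto_nhdsSet hcpt hne).1 (hγ.tendsto_nhdsSet_setOf_mapClusterPt hne hcpt) ε hε
  exact eventually_atTop.1 (hnear.mono fun t ht => le_of_lt ht)
end

section
/- In a spacetime-like structure, if the chronological relation ≪ is open, transitive, contained in the causal relation ≤ (a preorder), and if two distinct points x, z satisfy: z ∈ Ω_f(γ_x) for a curve γ_x through x and x ∈ Ω_f(γ_z) for a curve γ_z through z (with each point of the ω-limit set chronologically preceding exactly what the curve's points do), then I⁺(x) = I⁺(z) and I⁻(x) = I⁻(z); concretely: if for every z' ≫ z there is a point of γ_x in I⁻(z') arbitrarily far along γ_x, and all points of γ_x are in I⁺(x) ∪ {x} with x ≤ each, then I⁺(z) ⊆ I⁺(x), and symmetrically I⁺(x) ⊆ I⁺(z). -/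
open Set

section OpenRelation

variable {M : Type*} [TopologicalSpace M] {r : M → M → Prop}

theorem isOpen_setOf_rel_left (hopen : IsOpen {p : M × M | r p.1 p.2}) (w : M) :
    IsOpen {p | r p w} :=
  hopen.preimage (continuous_id.prodMk continuous_const)

theorem exists_mem_rel_of_mem_closure (hopen : IsOpen {p : M × M | r p.1 p.2}) {s : Set M}
    {z w : M} (hz : z ∈ closure s) (hzw : r z w) : ∃ y ∈ s, r y w :=
  let ⟨y, hyw, hy⟩ := mem_closure_iff.mp hz _ (isOpen_setOf_rel_left hopen w) hzw
  ⟨y, hy, hyw⟩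

end OpenRelation

theorem chron_future_subset_of_mem_omegaLimit_general {M : Type*} [TopologicalSpace M]
    (chron caus : M → M → Prop)
    (hopen : IsOpen {p : M × M | chron p.1 p.2})
    (hcomp : ∀ p q r, caus p q → chron q r → chron p r)
    (γ : ℝ → M) (x : M)
    (hmono : ∀ s : ℝ, 0 ≤ s → caus x (γ s))
    (z : M) (hz : z ∈ ⋂ t : ℝ, closure (γ '' Ici t)) :
    ∀ w, chron z w → chron x w := by
  intro w hzw
  obtain ⟨_, ⟨s, hs, rfl⟩, hsw⟩ := exists_mem_rel_of_mem_closure hopen (mem_iInter.mp hz 0) hzw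
  exact hcomp _ _ _ (hmono s hs) hsw

theorem chron_future_subset_of_mem_omegaLimit {M : Type*} [TopologicalSpace M]
    (chron caus : M → M → Prop)
    (hopen : IsOpen {p : M × M | chron p.1 p.2})
    (hchron_trans : ∀ p q r, chron p q → chron q r → chron p r)
    (hrefl : ∀ p, caus p p) (htrans : ∀ p q r, caus p q → caus q r → caus p r)
    (hsub : ∀ p q, chron p q → caus p q)
    (hcomp : ∀ p q r, caus p q → chron q r → chron p r)
    (γ : ℝ → M) (hγ : Continuous γ) (x : M) (hx : γ 0 = x)
    (hmono : ∀ s : ℝ, 0 ≤ s → caus x (γ s))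
    (z : M) (hz : z ∈ ⋂ t : ℝ, closure (γ '' Ici t)) :
    ∀ w, chron z w → chron x w :=
  chron_future_subset_of_mem_omegaLimit_general chron caus hopen hcomp γ x hmono z hz
end
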